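/- Let S : (0,1) → ℝ^{p×p} be a measurable, Bochner integrable family of real symmetric positive semidefinite matrices, and let w : (0,1) → ℝ be measurable with 0 ≤ w(τ) ≤ 1 for all τ and w(τ) > 0 whenever S(τ) ≠ 0. Then the weighted composite matrix Σ_w = ∫₀¹ w(τ) S(τ) dτ and the unweighted composite matrix Σ = ∫₀¹ S(τ) dτ have the same kernel, and hence the same column space. -/

import Mathlib

/-!
Both composite matrices are integrals of positive semidefinite matrices, so `v` lies in the
kernel of either one iff the quadratic form `vᵀ Σ(τ) v`, resp. `w(τ) vᵀ Σ(τ) v`, vanishes for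
almost every `τ`, i.e. iff `Σ(τ) v = 0` for almost every `τ`: the weight only vanishes where
`Σ(τ)` does. Both matrices are symmetric, so their column spaces are the orthogonal
complements of their (equal) kernels.
-/

open MeasureTheory

namespace LinearMap.IsSymmetric

variable {𝕜 E : Type*} [RCLike 𝕜] [NormedAddCommGroup E] [InnerProductSpace 𝕜 E]
  [FiniteDimensional 𝕜 E] {T U : E →ₗ[𝕜] E}

theorem range_eq_orthogonal_ker (hT : T.IsSymmetric) : range T = (ker T)ᗮ := by
  rw [← hT.orthogonal_range, Submodule.orthogonal_orthogonal]

theorem range_eq_range_of_ker_eq (hT : T.IsSymmetric) (hU : U.IsSymmetric)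
    (h : ker T = ker U) : range T = range U := by
  rw [hT.range_eq_orthogonal_ker, hU.range_eq_orthogonal_ker, h]

end LinearMap.IsSymmetric

namespace Matrix

section Hermitian

variable {𝕜 n : Type*} [RCLike 𝕜] [Fintype n] [DecidableEq n]

theorem toEuclideanLin_eq_conj_mulVecLin (A : Matrix n n 𝕜) :
    A.toEuclideanLin = (WithLp.linearEquiv 2 𝕜 (n → 𝕜)).symm.toLinearMap ∘ₗ A.mulVecLin ∘ₗ
      (WithLp.linearEquiv 2 𝕜 (n → 𝕜)).toLinearMap :=
  rfl

theorem IsHermitian.range_mulVecLin_eq_of_ker_eq {A B : Matrix n n 𝕜} (hA : A.IsHermitian)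
    (hB : B.IsHermitian) (h : LinearMap.ker A.mulVecLin = LinearMap.ker B.mulVecLin) :
    LinearMap.range A.mulVecLin = LinearMap.range B.mulVecLin := by
  set e := WithLp.linearEquiv 2 𝕜 (n → 𝕜)
  have ker_eq (M : Matrix n n 𝕜) :
      LinearMap.ker M.toEuclideanLin = (LinearMap.ker M.mulVecLin).comap e.toLinearMap := by
    rw [toEuclideanLin_eq_conj_mulVecLin, LinearEquiv.ker_comp, LinearMap.ker_comp]
  have range_eq (M : Matrix n n 𝕜) :
      LinearMap.range M.toEuclideanLin = (LinearMap.range M.mulVecLin).map e.symm.toLinearMap := by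
    rw [toEuclideanLin_eq_conj_mulVecLin, LinearMap.range_comp,
      LinearMap.range_comp_of_range_eq_top _ e.range]
  apply Submodule.map_injective_of_injective e.symm.injective
  rw [← range_eq, ← range_eq, (isSymmetric_toEuclideanLin_iff.mpr hA).range_eq_range_of_ker_eq
    (isSymmetric_toEuclideanLin_iff.mpr hB) (by rw [ker_eq, ker_eq, h])]

end Hermitian

theorem smul_mulVec_eq_zero_iff {R n : Type*} [Field R] [Fintype n] {c : R}
    {A : Matrix n n R} (hc : A ≠ 0 → c ≠ 0) (v : n → R) : (c • A) *ᵥ v = 0 ↔ A *ᵥ v = 0 := by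
  by_cases hA : A = 0
  · simp [hA]
  · rw [smul_mulVec, smul_eq_zero, or_iff_right (hc hA)]

section Integral

variable {α m n : Type*} [MeasurableSpace α] {μ : Measure α}

theorem isHermitian_of_integral {f : α → Matrix n n ℝ} (hf : ∀ᵐ x ∂μ, (f x).IsHermitian) :
    (of fun i j => ∫ x, f x i j ∂μ).IsHermitian := by
  ext i j
  simp only [conjTranspose_apply, of_apply, star_trivial]
  exact integral_congr_ae (hf.mono fun x hx => by simpa using hx.apply i j)

variable [Fintype n]

theorem integrable_mulVec_apply {f : α → Matrix m n ℝ}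
    (hf : ∀ i j, Integrable (fun x => f x i j) μ) (v : n → ℝ) (i : m) :
    Integrable (fun x => (f x *ᵥ v) i) μ :=
  integrable_finsetSum _ fun j _ => (hf i j).mul_const (v j)

theorem of_integral_mulVec {f : α → Matrix m n ℝ}
    (hf : ∀ i j, Integrable (fun x => f x i j) μ) (v : n → ℝ) :
    (of fun i j => ∫ x, f x i j ∂μ) *ᵥ v = fun i => ∫ x, (f x *ᵥ v) i ∂μ := by
  ext i
  simp only [mulVec, dotProduct, of_apply]
  rw [integral_finsetSum _ fun j _ => (hf i j).mul_const (v j)]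
  simp_rw [integral_mul_const]

theorem dotProduct_of_integral_mulVec {f : α → Matrix n n ℝ}
    (hf : ∀ i j, Integrable (fun x => f x i j) μ) (v : n → ℝ) :
    v ⬝ᵥ ((of fun i j => ∫ x, f x i j ∂μ) *ᵥ v) = ∫ x, v ⬝ᵥ (f x *ᵥ v) ∂μ := by
  simp only [of_integral_mulVec hf, dotProduct]
  rw [integral_finsetSum _ fun i _ => (integrable_mulVec_apply hf v i).const_mul (v i)]
  simp_rw [integral_const_mul]

theorem of_integral_mulVec_eq_zero_iff {f : α → Matrix n n ℝ}
    (hf : ∀ i j, Integrable (fun x => f x i j) μ) (hpsd : ∀ᵐ x ∂μ, (f x).PosSemidef)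
    (v : n → ℝ) : (of fun i j => ∫ x, f x i j ∂μ) *ᵥ v = 0 ↔ ∀ᵐ x ∂μ, f x *ᵥ v = 0 := by
  constructor
  · intro h
    have hquad : ∫ x, v ⬝ᵥ (f x *ᵥ v) ∂μ = 0 := by
      rw [← dotProduct_of_integral_mulVec hf, h, dotProduct_zero]
    have hnonneg : 0 ≤ᵐ[μ] fun x => v ⬝ᵥ (f x *ᵥ v) :=
      hpsd.mono fun x hx => hx.dotProduct_mulVec_nonneg v
    have hquad_int : Integrable (fun x => v ⬝ᵥ (f x *ᵥ v)) μ :=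
      integrable_finsetSum _ fun i _ => (integrable_mulVec_apply hf v i).const_mul (v i)
    filter_upwards [(integral_eq_zero_iff_of_nonneg_ae hnonneg hquad_int).mp hquad, hpsd]
      with x hx hxpsd
    exact (hxpsd.dotProduct_mulVec_zero_iff v).mp hx
  · intro h
    rw [of_integral_mulVec hf]
    ext i
    exact integral_eq_zero_of_ae (h.mono fun x hx => congrFun hx i)

end Integral

end Matrix

theorem weighted_composite_matrix_same_kernel_and_column_space_general
    {p : ℕ} (S : ℝ → Matrix (Fin p) (Fin p) ℝ)
    (hint : ∀ i j, IntegrableOn (fun τ => S τ i j) (Set.Ioo 0 1) volume)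
    (hpsd : ∀ τ ∈ Set.Ioo (0 : ℝ) 1, (S τ).PosSemidef)
    (w : ℝ → ℝ) (hw_meas : Measurable w)
    (hw01 : ∀ τ, 0 ≤ w τ ∧ w τ ≤ 1)
    (hw_pos : ∀ τ ∈ Set.Ioo (0 : ℝ) 1, S τ ≠ 0 → 0 < w τ) :
    LinearMap.ker
        (Matrix.of fun i j => ∫ τ in Set.Ioo (0 : ℝ) 1, w τ * S τ i j).mulVecLin
      = LinearMap.ker
        (Matrix.of fun i j => ∫ τ in Set.Ioo (0 : ℝ) 1, S τ i j).mulVecLin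
    ∧ LinearMap.range
        (Matrix.of fun i j => ∫ τ in Set.Ioo (0 : ℝ) 1, w τ * S τ i j).mulVecLin
      = LinearMap.range
        (Matrix.of fun i j => ∫ τ in Set.Ioo (0 : ℝ) 1, S τ i j).mulVecLin := by
  have hS_psd : ∀ᵐ τ ∂volume.restrict (Set.Ioo (0 : ℝ) 1), (S τ).PosSemidef :=
    ae_restrict_of_forall_mem measurableSet_Ioo hpsd
  have hwS_psd : ∀ᵐ τ ∂volume.restrict (Set.Ioo (0 : ℝ) 1), (w τ • S τ).PosSemidef :=
    hS_psd.mono fun τ hτ => hτ.smul (hw01 τ).1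
  have hwS_int : ∀ i j, IntegrableOn (fun τ => (w τ • S τ) i j) (Set.Ioo 0 1) volume :=
    fun i j => (hint i j).bdd_mul (c := 1) hw_meas.aestronglyMeasurable
      (ae_of_all _ fun τ => by rw [Real.norm_of_nonneg (hw01 τ).1]; exact (hw01 τ).2)
  have hker : LinearMap.ker
        (Matrix.of fun i j => ∫ τ in Set.Ioo (0 : ℝ) 1, w τ * S τ i j).mulVecLin
      = LinearMap.ker (Matrix.of fun i j => ∫ τ in Set.Ioo (0 : ℝ) 1, S τ i j).mulVecLin := by
    ext v
    simp only [LinearMap.mem_ker, Matrix.mulVecLin_apply]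
    refine (Matrix.of_integral_mulVec_eq_zero_iff hwS_int hwS_psd v).trans <|
      (Filter.eventually_congr ((ae_restrict_mem measurableSet_Ioo).mono fun τ hτ => ?_)).trans
        (Matrix.of_integral_mulVec_eq_zero_iff hint hS_psd v).symm
    exact Matrix.smul_mulVec_eq_zero_iff (fun hS => (hw_pos τ hτ hS).ne') v
  exact ⟨hker, Matrix.IsHermitian.range_mulVecLin_eq_of_ker_eq
    (Matrix.isHermitian_of_integral (hwS_psd.mono fun _ h => h.isHermitian))
    (Matrix.isHermitian_of_integral (hS_psd.mono fun _ h => h.isHermitian)) hker⟩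

/-- Let `S : (0,1) → ℝ^{p×p}` be a measurable, integrable family of symmetric positive
semidefinite matrices and `w : (0,1) → [0,1]` a measurable weight with `w(τ) > 0`
whenever `S(τ) ≠ 0`.  Then the weighted composite matrix `Σ_w = ∫₀¹ w(τ) S(τ) dτ` and
the unweighted composite matrix `Σ = ∫₀¹ S(τ) dτ` have the same kernel, and hence the
same column space. -/
theorem weighted_composite_matrix_same_kernel_and_column_space
    {p : ℕ} (S : ℝ → Matrix (Fin p) (Fin p) ℝ)
    (hmeas : ∀ i j, Measurable fun τ => S τ i j)
    (hint : ∀ i j, IntegrableOn (fun τ => S τ i j) (Set.Ioo 0 1) volume)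
    (hpsd : ∀ τ ∈ Set.Ioo (0 : ℝ) 1, (S τ).PosSemidef)
    (w : ℝ → ℝ) (hw_meas : Measurable w)
    (hw01 : ∀ τ, 0 ≤ w τ ∧ w τ ≤ 1)
    (hw_pos : ∀ τ ∈ Set.Ioo (0 : ℝ) 1, S τ ≠ 0 → 0 < w τ) :
    LinearMap.ker
        (Matrix.of fun i j => ∫ τ in Set.Ioo (0 : ℝ) 1, w τ * S τ i j).mulVecLin
      = LinearMap.ker
        (Matrix.of fun i j => ∫ τ in Set.Ioo (0 : ℝ) 1, S τ i j).mulVecLin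
    ∧ LinearMap.range
        (Matrix.of fun i j => ∫ τ in Set.Ioo (0 : ℝ) 1, w τ * S τ i j).mulVecLin
      = LinearMap.range
        (Matrix.of fun i j => ∫ τ in Set.Ioo (0 : ℝ) 1, S τ i j).mulVecLin :=
  weighted_composite_matrix_same_kernel_and_column_space_general S hint hpsd w hw_meas hw01 hw_pos
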